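/- Let α be a type with decidable equality and let C be the default alignment cost function. For all lists A B : List α, levenshtein C A B equals the least natural number n for which there exists a chain f : Fin (n+1) → List α with f 0 = A, f (Fin.last n) = B, and for each i : Fin n the consecutive lists differ by a single-element edit: either (∃ p a s, f i.castSucc = p ++ a :: s ∧ f i.succ = p ++ s) (a deletion) or (∃ p a s, f i.succ = p ++ a :: s ∧ f i.castSucc = p ++ s) (an insertion). That is, the dynamic-programming edit distance with the default cost is exactly the minimum number of single-word insertions and deletions needed to transform one sentence into the other. -/

import Mathlib

set_option linter.unusedSectionVars false

namespace Levenshtein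

/-- A cost structure for Levenshtein edit distance (as in the former Mathlib
`Mathlib/Data/List/EditDistance/Defs.lean`). -/
structure Cost (α β δ : Type*) where
  /-- Cost to delete an element from a list. -/
  delete : α → δ
  /-- Cost to insert an element into a list. -/
  insert : β → δ
  /-- Cost to substitute one element for another in a list. -/
  substitute : α → β → δ

/-- Implementation detail for `levenshtein` (former Mathlib `Levenshtein.impl`). -/
def impl {α β δ : Type*} [AddZeroClass δ] [Min δ] (C : Cost α β δ)
    (xs : List α) (y : β) (d : {r : List δ // 0 < r.length}) :
    {r : List δ // 0 < r.length} :=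
  let ⟨ds, w⟩ := d
  xs.zip (ds.zip ds.tail) |>.foldr
    (init := ⟨[C.insert y + ds.getLast (List.ne_nil_of_length_pos w)], by simp⟩)
    (fun ⟨x, d₀, d₁⟩ ⟨r, w⟩ =>
      ⟨min (C.delete x + r[0]) (min (C.insert y + d₀) (C.substitute x y + d₁)) :: r, by simp⟩)

end Levenshtein

open Levenshtein in
/-- `suffixLevenshtein C xs ys` computes the Levenshtein distance
(using the cost functions provided by `C`) from each suffix of `xs` to `ys`. -/
def suffixLevenshtein {α β δ : Type*} [AddZeroClass δ] [Min δ] (C : Cost α β δ)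
    (xs : List α) (ys : List β) : {r : List δ // 0 < r.length} :=
  ys.foldr
    (impl C xs)
    (xs.foldr (init := ⟨[0], by simp⟩) (fun a ⟨ds, w⟩ => ⟨(C.delete a + ds[0]) :: ds, by simp⟩))

open Levenshtein in
/-- `levenshtein C xs ys` computes the Levenshtein distance from `xs` to `ys`
(former Mathlib definition). -/
def levenshtein {α β δ : Type*} [AddZeroClass δ] [Min δ] (C : Cost α β δ)
    (xs : List α) (ys : List β) : δ :=
  let ⟨r, w⟩ := suffixLevenshtein C xs ys
  r[0]

/-- The default alignment cost function: deletion and insertion cost 1,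
substitution costs 0 for equal words and 2 for distinct words. -/
def alignCost {α : Type*} [DecidableEq α] : Levenshtein.Cost α α ℕ where
  delete _ := 1
  insert _ := 1
  substitute a b := if a = b then 0 else 2


section LevenshteinLemmas

open Levenshtein

variable {α β δ : Type*} [AddZeroClass δ] [Min δ]

theorem levenshtein_eq_head (C : Cost α β δ) (xs : List α) (ys : List β) :
    levenshtein C xs ys = (suffixLevenshtein C xs ys).1[0]'(suffixLevenshtein C xs ys).2 := rfl

theorem list_head_of_eq {l : List δ} {a : δ} {t : List δ} (h : l = a :: t) (hl : 0 < l.length) :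
    l[0] = a := by
  subst h; rfl

theorem impl_cons_val (C : Cost α β δ) (x : α) (xs : List α) (y : β)
    (d : {r : List δ // 0 < r.length}) (d₀ : δ) (S : {r : List δ // 0 < r.length})
    (h : d.1 = d₀ :: S.1) :
    (impl C (x :: xs) y d).1 =
      min (C.delete x + (impl C xs y S).1[0]'(impl C xs y S).2)
        (min (C.insert y + d₀) (C.substitute x y + S.1[0]'S.2)) :: (impl C xs y S).1 := by
  obtain ⟨ds, w⟩ := d
  obtain ⟨s, ws⟩ := S
  simp only at h
  subst h
  cases s with
  | nil => simp at ws
  | cons v t => rfl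

theorem suffixLevenshtein_nil_val (C : Cost α β δ) (ys : List β) :
    (suffixLevenshtein C [] ys).1 = [levenshtein C [] ys] := by
  cases ys with
  | nil => rfl
  | cons y ys => rfl

theorem suffixLevenshtein_cons_val (C : Cost α β δ) (x : α) (xs : List α) (ys : List β) :
    (suffixLevenshtein C (x :: xs) ys).1 =
      levenshtein C (x :: xs) ys :: (suffixLevenshtein C xs ys).1 := by
  induction ys with
  | nil => rfl
  | cons y ys ih =>
    have e := impl_cons_val C x xs y _ _ _ ih
    show (impl C (x :: xs) y (suffixLevenshtein C (x :: xs) ys)).1 = _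
    rw [e]
    congr 1
    rw [levenshtein_eq_head]
    exact (list_head_of_eq e _).symm

theorem levenshtein_nil_nil (C : Cost α β δ) : levenshtein C ([] : List α) ([] : List β) = 0 := rfl

theorem levenshtein_cons_nil (C : Cost α β δ) (x : α) (xs : List α) :
    levenshtein C (x :: xs) ([] : List β) = C.delete x + levenshtein C xs [] := rfl

theorem levenshtein_nil_cons (C : Cost α β δ) (y : β) (ys : List β) :
    levenshtein C ([] : List α) (y :: ys) = C.insert y + levenshtein C [] ys := by
  have h := suffixLevenshtein_nil_val C ys
  rw [levenshtein_eq_head, levenshtein_eq_head C [] ys]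
  show (impl C [] y (suffixLevenshtein C [] ys)).1[0]'(impl C [] y _).2 = _
  generalize suffixLevenshtein C [] ys = d at h ⊢
  obtain ⟨ds, w⟩ := d
  simp only at h
  subst h
  rfl

theorem levenshtein_cons_cons (C : Cost α β δ) (x : α) (xs : List α) (y : β) (ys : List β) :
    levenshtein C (x :: xs) (y :: ys) =
      min (C.delete x + levenshtein C xs (y :: ys))
        (min (C.insert y + levenshtein C (x :: xs) ys) (C.substitute x y + levenshtein C xs ys)) := by
  have e := impl_cons_val C x xs y _ _ _ (suffixLevenshtein_cons_val C x xs ys)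
  rw [levenshtein_eq_head]
  exact list_head_of_eq e _

end LevenshteinLemmas

namespace EditChainAux

variable {α : Type*} [DecidableEq α]

@[simp] theorem alignCost_delete (a : α) :
    (alignCost : Levenshtein.Cost α α ℕ).delete a = 1 := rfl

@[simp] theorem alignCost_insert (a : α) :
    (alignCost : Levenshtein.Cost α α ℕ).insert a = 1 := rfl

theorem alignCost_substitute_self (a : α) :
    (alignCost : Levenshtein.Cost α α ℕ).substitute a a = 0 := by
  simp [alignCost]

theorem alignCost_substitute_ne {a b : α} (h : a ≠ b) :
    (alignCost : Levenshtein.Cost α α ℕ).substitute a b = 2 := by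
  simp [alignCost, h]

/-- A single insertion or deletion. -/
def Step (X Y : List α) : Prop :=
  (∃ (p : List α) (a : α) (s : List α), X = p ++ a :: s ∧ Y = p ++ s) ∨
  (∃ (p : List α) (a : α) (s : List α), Y = p ++ a :: s ∧ X = p ++ s)

/-- `Seq n A B` : `B` can be obtained from `A` by `n` single edits. -/
inductive Seq : ℕ → List α → List α → Prop
  | refl (A : List α) : Seq 0 A A
  | cons {A A' B : List α} {n : ℕ} : Step A A' → Seq n A' B → Seq (n + 1) A B

theorem Seq.snoc {n : ℕ} {A B B' : List α} (h : Seq n A B) (s : Step B B') :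
    Seq (n + 1) A B' := by
  induction h with
  | refl A => exact Seq.cons s (Seq.refl _)
  | cons st _ ih => exact Seq.cons st (ih s)

theorem Step.cons {A A' : List α} (x : α) (h : Step A A') : Step (x :: A) (x :: A') := by
  rcases h with ⟨p, a, s, h1, h2⟩ | ⟨p, a, s, h1, h2⟩
  · exact Or.inl ⟨x :: p, a, s, by simp [h1], by simp [h2]⟩
  · exact Or.inr ⟨x :: p, a, s, by simp [h1], by simp [h2]⟩

theorem Seq.consCongr {n : ℕ} {A B : List α} (x : α) (h : Seq n A B) :
    Seq n (x :: A) (x :: B) := by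
  induction h with
  | refl A => exact Seq.refl _
  | cons st _ ih => exact Seq.cons (st.cons x) ih

theorem levenshtein_self (A : List α) : levenshtein (alignCost (α := α)) A A = 0 := by
  induction A with
  | nil => simp [levenshtein_nil_nil]
  | cons a as ih =>
    rw [levenshtein_cons_cons, alignCost_delete, alignCost_insert,
      alignCost_substitute_self]
    omega

/-- Head deletion increases the distance by at most one. -/
theorem le_one_add_del (a : α) (s B : List α) :
    levenshtein alignCost (a :: s) B ≤ 1 + levenshtein alignCost s B := by
  cases B with
  | nil =>
    rw [levenshtein_cons_nil, alignCost_delete]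
  | cons b bs =>
    rw [levenshtein_cons_cons, alignCost_delete, alignCost_insert]
    omega

/-- Head insertion increases the distance by at most one. -/
theorem le_one_add_ins (a : α) (s B : List α) :
    levenshtein alignCost s B ≤ 1 + levenshtein alignCost (a :: s) B := by
  induction B generalizing s with
  | nil =>
    rw [levenshtein_cons_nil, alignCost_delete]
    omega
  | cons b bs ih =>
    rw [levenshtein_cons_cons, alignCost_delete, alignCost_insert]
    have hins : levenshtein alignCost s (b :: bs) ≤ 1 + levenshtein alignCost s bs := by
      cases s with
      | nil => rw [levenshtein_nil_cons, alignCost_insert]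
      | cons x xs =>
        rw [levenshtein_cons_cons, alignCost_delete, alignCost_insert]
        omega
    have h2 := ih s
    omega

/-- Transfer a `≤ 1 + ·` inequality through a common head. -/
theorem cons_transfer {s₁ s₂ : List α}
    (h : ∀ B : List α, levenshtein alignCost s₁ B ≤ 1 + levenshtein alignCost s₂ B)
    (x : α) (B : List α) :
    levenshtein alignCost (x :: s₁) B ≤ 1 + levenshtein alignCost (x :: s₂) B := by
  induction B with
  | nil =>
    rw [levenshtein_cons_nil, levenshtein_cons_nil, alignCost_delete]
    have := h []
    omega
  | cons b bs ih =>
    rw [levenshtein_cons_cons, levenshtein_cons_cons, alignCost_delete, alignCost_insert]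
    have h1 := h (b :: bs)
    have h2 := h bs
    omega

theorem prefix_transfer {s₁ s₂ : List α}
    (h : ∀ B : List α, levenshtein alignCost s₁ B ≤ 1 + levenshtein alignCost s₂ B)
    (p : List α) : ∀ B : List α,
    levenshtein alignCost (p ++ s₁) B ≤ 1 + levenshtein alignCost (p ++ s₂) B := by
  induction p with
  | nil => simpa using h
  | cons x xs ih => exact cons_transfer ih x

theorem step_le {X Y : List α} (h : Step X Y) (B : List α) :
    levenshtein alignCost X B ≤ 1 + levenshtein alignCost Y B := by
  rcases h with ⟨p, a, s, h1, h2⟩ | ⟨p, a, s, h1, h2⟩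
  · subst h1; subst h2
    exact prefix_transfer (fun B => le_one_add_del a s B) p B
  · subst h1; subst h2
    exact prefix_transfer (fun B => le_one_add_ins a s B) p B

theorem seq_bound {n : ℕ} {A B : List α} (h : Seq n A B) :
    levenshtein alignCost A B ≤ n := by
  induction h with
  | refl A => exact (levenshtein_self A).le
  | cons st h ih =>
    calc levenshtein alignCost _ _ ≤ 1 + levenshtein alignCost _ _ := step_le st _
      _ ≤ _ := by omega

theorem exists_seq (A B : List α) : Seq (levenshtein alignCost A B) A B := by
  induction A generalizing B with
  | nil =>
    induction B with
    | nil => rw [levenshtein_nil_nil]; exact Seq.refl _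
    | cons b bs ihb =>
      rw [levenshtein_nil_cons, alignCost_insert, Nat.add_comm]
      exact Seq.cons (Or.inr ⟨[], b, [], rfl, rfl⟩) (ihb.consCongr b)
  | cons a as iha =>
    induction B with
    | nil =>
      rw [levenshtein_cons_nil, alignCost_delete, Nat.add_comm]
      exact Seq.cons (Or.inl ⟨[], a, as, rfl, rfl⟩) (iha [])
    | cons b bs ihb =>
      rw [levenshtein_cons_cons]
      have hdel : Seq (alignCost.delete a + levenshtein alignCost as (b :: bs))
          (a :: as) (b :: bs) := by
        rw [alignCost_delete, Nat.add_comm]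
        exact Seq.cons (Or.inl ⟨[], a, as, rfl, rfl⟩) (iha (b :: bs))
      have hins : Seq (alignCost.insert b + levenshtein alignCost (a :: as) bs)
          (a :: as) (b :: bs) := by
        rw [alignCost_insert, Nat.add_comm]
        exact ihb.snoc (Or.inr ⟨[], b, bs, rfl, rfl⟩)
      have hsub : Seq (alignCost.substitute a b + levenshtein alignCost as bs)
          (a :: as) (b :: bs) := by
        by_cases hab : a = b
        · subst hab
          rw [alignCost_substitute_self, Nat.zero_add]
          exact (iha bs).consCongr a
        · rw [alignCost_substitute_ne hab]
          have h2 : 2 + levenshtein alignCost as bs =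
              (levenshtein alignCost as bs + 1) + 1 := by omega
          rw [h2]
          exact Seq.cons (Or.inl ⟨[], a, as, rfl, rfl⟩)
            ((iha bs).snoc (Or.inr ⟨[], b, bs, rfl, rfl⟩))
      rcases min_cases (alignCost.delete a + levenshtein alignCost as (b :: bs))
          (min (alignCost.insert b + levenshtein alignCost (a :: as) bs)
            (alignCost.substitute a b + levenshtein alignCost as bs)) with
        ⟨h, -⟩ | ⟨h, -⟩
      · rw [h]; exact hdel
      · rw [h]
        rcases min_cases (alignCost.insert b + levenshtein alignCost (a :: as) bs)
            (alignCost.substitute a b + levenshtein alignCost as bs) with ⟨h', -⟩ | ⟨h', -⟩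
        · rw [h']; exact hins
        · rw [h']; exact hsub

/-- Convert a `Seq` into a `Fin`-indexed chain. -/
theorem seq_to_chain {n : ℕ} {A B : List α} (h : Seq n A B) :
    ∃ f : Fin (n + 1) → List α,
      f 0 = A ∧ f (Fin.last n) = B ∧ ∀ i : Fin n, Step (f i.castSucc) (f i.succ) := by
  induction h with
  | refl A =>
    exact ⟨fun _ => A, rfl, rfl, fun i => i.elim0⟩
  | @cons A A' B n st _ ih =>
    obtain ⟨f, h0, hl, hc⟩ := ih
    refine ⟨Fin.cases A f, Fin.cases_zero .., ?_, ?_⟩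
    · show (Fin.cases A f : Fin (n + 2) → List α) (Fin.last (n + 1)) = B
      rw [← Fin.succ_last]
      exact (Fin.cases_succ (motive := fun _ => List α) _).trans hl
    · intro i
      induction i using Fin.cases with
      | zero =>
        show Step ((Fin.cases A f : Fin (n + 2) → List α) (0 : Fin (n + 1)).castSucc)
          ((Fin.cases A f : Fin (n + 2) → List α) (0 : Fin (n + 1)).succ)
        rw [Fin.castSucc_zero, Fin.succ_zero_eq_one]
        show Step (Fin.cases A f 0) (Fin.cases A f (Fin.succ 0))
        rw [Fin.cases_zero, Fin.cases_succ, h0]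
        exact st
      | succ j =>
        show Step ((Fin.cases A f : Fin (n + 2) → List α) j.succ.castSucc)
          ((Fin.cases A f : Fin (n + 2) → List α) j.succ.succ)
        rw [← Fin.succ_castSucc]
        show Step (Fin.cases A f (Fin.succ j.castSucc)) (Fin.cases A f (Fin.succ j.succ))
        rw [Fin.cases_succ, Fin.cases_succ]
        exact hc j

/-- Convert a `Fin`-indexed chain into a `Seq`. -/
theorem chain_to_seq : ∀ {n : ℕ} {A B : List α} (f : Fin (n + 1) → List α),
    f 0 = A → f (Fin.last n) = B → (∀ i : Fin n, Step (f i.castSucc) (f i.succ)) →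
    Seq n A B := by
  intro n
  induction n with
  | zero =>
    intro A B f h0 hl _
    rw [show (Fin.last 0) = 0 from rfl, h0] at hl
    rw [← hl]
    exact Seq.refl _
  | succ n ih =>
    intro A B f h0 hl hc
    have st : Step A (f 1) := by
      have := hc 0
      rwa [Fin.castSucc_zero, Fin.succ_zero_eq_one, h0] at this
    refine Seq.cons st (ih (fun i => f i.succ) ?_ ?_ ?_)
    · exact congrArg f Fin.succ_zero_eq_one
    · exact (congrArg f (Fin.succ_last n)).trans hl
    · intro i
      have := hc i.succ
      rwa [← Fin.succ_castSucc] at this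

end EditChainAux

theorem levenshtein_eq_min_insert_delete_chain
    {α : Type*} [DecidableEq α] (A B : List α) :
    levenshtein alignCost A B =
      sInf {n : ℕ | ∃ f : Fin (n + 1) → List α,
        f 0 = A ∧ f (Fin.last n) = B ∧
        ∀ i : Fin n,
          (∃ (p : List α) (a : α) (s : List α),
              f i.castSucc = p ++ a :: s ∧ f i.succ = p ++ s) ∨
          (∃ (p : List α) (a : α) (s : List α),
              f i.succ = p ++ a :: s ∧ f i.castSucc = p ++ s)} := by
  have hmem : levenshtein alignCost A B ∈ {n : ℕ | ∃ f : Fin (n + 1) → List α,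
      f 0 = A ∧ f (Fin.last n) = B ∧
      ∀ i : Fin n,
        (∃ (p : List α) (a : α) (s : List α),
            f i.castSucc = p ++ a :: s ∧ f i.succ = p ++ s) ∨
        (∃ (p : List α) (a : α) (s : List α),
            f i.succ = p ++ a :: s ∧ f i.castSucc = p ++ s)} := by
    obtain ⟨f, h0, hl, hc⟩ := EditChainAux.seq_to_chain (EditChainAux.exists_seq A B)
    exact ⟨f, h0, hl, hc⟩
  refine le_antisymm (le_csInf ⟨_, hmem⟩ ?_) (Nat.sInf_le hmem)
  rintro n ⟨f, h0, hl, hc⟩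
  exact EditChainAux.seq_bound (EditChainAux.chain_to_seq f h0 hl hc)
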